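/- Let $p \in (0,1)$ and $q = p' = p/(p-1) < 0$, and let $f : \mathbb{R}^n \to [0,\infty)$ be measurable with $0 < \int_{\mathbb{R}^n} f\, dz < +\infty$. Then for every $x \in \mathbb{R}^n$, $\int_{\mathbb{R}^n} e^{\frac1p\langle x, z\rangle} f(z)^{1/p}\, dz \le \big( \int_{\mathbb{R}^n} f\, dz \big)\, f^\circ\big( \tfrac{x}{1-p} \big)^{1/q}$, with the conventions $\infty^{-1} = 0$ and $0^{1/q} = \infty$ for $q<0$. -/

import Mathlib

open MeasureTheory Real Filter
open scoped ENNReal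

noncomputable section

/-- The polar (dual) function `f°(x) = inf_y exp(-⟨x,y⟩)/f(y)`, valued in `[0,∞]`. -/
def polarFn {n : ℕ} (f : EuclideanSpace ℝ (Fin n) → ℝ) (x : EuclideanSpace ℝ (Fin n)) : ℝ≥0∞ :=
  ⨅ y : EuclideanSpace ℝ (Fin n),
    ENNReal.ofReal (Real.exp (-(inner ℝ x y : ℝ))) / ENNReal.ofReal (f y)

/-
Since `q < 0`, the defining inequality `f°(u) f(z) ≤ e^{-⟨u,z⟩}` at `u = x/(1-p)` inverts under
`t ↦ t^{1/q}` to `e^{⟨x,z⟩/p} ≤ f°(u)^{1/q} f(z)^{1/q}`. Multiplying by `f(z)^{1/p}` and using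
`1/p + 1/q = 1` gives the pointwise bound `e^{⟨x,z⟩/p} f(z)^{1/p} ≤ f(z) f°(u)^{1/q}`, which
integrates to the claim.
-/

theorem ENNReal.rpow_le_rpow_of_nonpos {x y : ℝ≥0∞} {r : ℝ} (h : x ≤ y) (hr : r ≤ 0) :
    y ^ r ≤ x ^ r := by
  have h_inv := ENNReal.inv_le_inv.mpr (ENNReal.rpow_le_rpow h (neg_nonneg.mpr hr))
  rwa [← ENNReal.rpow_neg, ← ENNReal.rpow_neg, neg_neg] at h_inv

theorem ENNReal.rpow_mul_rpow_le_mul_rpow_of_mul_le {a c e : ℝ≥0∞} {s t : ℝ}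
    (hs : s < 0) (ht : 0 < t) (hst : s + t = 1) (ha : a ≠ ⊤) (hca : c * a ≤ e) :
    e ^ s * a ^ t ≤ a * c ^ s := by
  rcases eq_or_ne a 0 with rfl | ha0
  · simp [ENNReal.zero_rpow_of_pos ht]
  rcases eq_or_ne c 0 with rfl | hc0
  · simp [ENNReal.zero_rpow_of_neg hs, ENNReal.mul_top ha0]
  calc e ^ s * a ^ t
      ≤ (c * a) ^ s * a ^ t :=
        mul_le_mul_left (ENNReal.rpow_le_rpow_of_nonpos hca hs.le) _
    _ = c ^ s * a ^ (s + t) := by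
        rw [ENNReal.mul_rpow_of_ne_zero hc0 ha0, ENNReal.rpow_add _ _ ha0 ha, mul_assoc]
    _ = a * c ^ s := by rw [hst, ENNReal.rpow_one, mul_comm]

theorem polarFn_mul_le {n : ℕ} (f : EuclideanSpace ℝ (Fin n) → ℝ) (u z : EuclideanSpace ℝ (Fin n)) :
    polarFn f u * ENNReal.ofReal (f z) ≤ ENNReal.ofReal (Real.exp (-(inner ℝ u z : ℝ))) :=
  calc polarFn f u * ENNReal.ofReal (f z)
      ≤ ENNReal.ofReal (Real.exp (-(inner ℝ u z : ℝ))) / ENNReal.ofReal (f z) *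
          ENNReal.ofReal (f z) := by gcongr; exact iInf_le _ z
    _ ≤ ENNReal.ofReal (Real.exp (-(inner ℝ u z : ℝ))) := by
        rw [mul_comm]; exact ENNReal.mul_div_le

theorem ENNReal.ofReal_exp_rpow (a s : ℝ) :
    ENNReal.ofReal (Real.exp a) ^ s = ENNReal.ofReal (Real.exp (a * s)) := by
  rw [ENNReal.ofReal_rpow_of_pos (Real.exp_pos a), Real.exp_mul]

theorem expTransform_le_polar_general (n : ℕ) (p q : ℝ)
    (hp0 : 0 < p) (hp1 : p < 1) (hq : q = p / (p - 1))
    (f : EuclideanSpace ℝ (Fin n) → ℝ)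
    (hmeas : Measurable f)
    (x : EuclideanSpace ℝ (Fin n)) :
    (∫⁻ z, ENNReal.ofReal (Real.exp ((1 / p) * (inner ℝ x z : ℝ))) *
        ENNReal.ofReal (f z) ^ (1 / p)) ≤
      (∫⁻ z, ENNReal.ofReal (f z)) * polarFn f ((1 - p)⁻¹ • x) ^ (1 / q) := by
  have h1p : 1 - p ≠ 0 := by linarith
  have hq_neg : 1 / q < 0 := by
    rw [hq, one_div_div]; exact div_neg_of_neg_of_pos (by linarith) hp0
  have h_conj : 1 / q + 1 / p = 1 := by
    rw [hq, one_div_div]; field_simp; ring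
  have h_exp (z : EuclideanSpace ℝ (Fin n)) :
      ENNReal.ofReal (Real.exp (-(inner ℝ ((1 - p)⁻¹ • x) z : ℝ))) ^ (1 / q) =
        ENNReal.ofReal (Real.exp ((1 / p) * (inner ℝ x z : ℝ))) := by
    rw [ENNReal.ofReal_exp_rpow, real_inner_smul_left, hq]
    congr 2
    field_simp
    ring
  calc (∫⁻ z, ENNReal.ofReal (Real.exp ((1 / p) * (inner ℝ x z : ℝ))) *
        ENNReal.ofReal (f z) ^ (1 / p))
      ≤ ∫⁻ z, ENNReal.ofReal (f z) * polarFn f ((1 - p)⁻¹ • x) ^ (1 / q) :=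
        lintegral_mono fun z => h_exp z ▸
          ENNReal.rpow_mul_rpow_le_mul_rpow_of_mul_le hq_neg (by positivity) h_conj
            ENNReal.ofReal_ne_top (polarFn_mul_le f _ z)
    _ = (∫⁻ z, ENNReal.ofReal (f z)) * polarFn f ((1 - p)⁻¹ • x) ^ (1 / q) :=
        lintegral_mul_const _ hmeas.ennreal_ofReal

/-- For `0 < p < 1`, `q = p/(p-1)` and `0 < ∫ f < ∞`, the pointwise bound
`∫ e^{⟨x,z⟩/p} f(z)^{1/p} dz ≤ (∫ f) · f°(x/(1-p))^{1/q}`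
(with `∞⁻¹ = 0` and `0^{1/q} = ∞` for `q < 0`). -/
theorem expTransform_le_polar (n : ℕ) (hn : 1 ≤ n) (p q : ℝ)
    (hp0 : 0 < p) (hp1 : p < 1) (hq : q = p / (p - 1))
    (f : EuclideanSpace ℝ (Fin n) → ℝ)
    (hmeas : Measurable f) (hpos : ∀ z, 0 ≤ f z)
    (hlow : 0 < ∫⁻ z, ENNReal.ofReal (f z))
    (hup : (∫⁻ z, ENNReal.ofReal (f z)) < ⊤)
    (x : EuclideanSpace ℝ (Fin n)) :
    (∫⁻ z, ENNReal.ofReal (Real.exp ((1 / p) * (inner ℝ x z : ℝ))) *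
        ENNReal.ofReal (f z) ^ (1 / p)) ≤
      (∫⁻ z, ENNReal.ofReal (f z)) * polarFn f ((1 - p)⁻¹ • x) ^ (1 / q) :=
  expTransform_le_polar_general n p q hp0 hp1 hq f hmeas x
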